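/- arXiv:2003.01819 — 2 statements merged into one kernel-verified Lean document; each statement's English description precedes it below -/
import Mathlib

section
/- Let p be an odd prime. The holomorph Hol(D_{2p²}) of the dihedral group of order 2p² has a unique (hence normal) Sylow p-subgroup, which has order p⁵. -/
open Equiv

/-- The left regular representation of a group `N` in `Equiv.Perm N`. -/
def leftReg (N : Type*) [Group N] : N →* Equiv.Perm N :=
  MulAction.toPermHom N N

/-- The holomorph of `N`: the normalizer of the image of the left regular
representation inside the symmetric group on `N`. -/
def Hol (N : Type*) [Group N] : Subgroup (Equiv.Perm N) :=
  Subgroup.normalizer (MonoidHom.range (leftReg N))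

/-- A subgroup of `Equiv.Perm N` is semiregular if every non-identity element
has no fixed point on `N`. -/
def IsSemiregular {N : Type*} [Group N] (H : Subgroup (Equiv.Perm N)) : Prop :=
  ∀ g ∈ H, g ≠ 1 → ∀ x : N, g x ≠ x

/-- A subgroup of `Equiv.Perm N` is regular if its natural action on `N` is
simply transitive. -/
def IsRegularSubgroup {N : Type*} [Group N] (G : Subgroup (Equiv.Perm N)) : Prop :=
  ∀ x y : N, ∃! g : G, (g : Equiv.Perm N) x = y

/-- The cyclic group of order `n` (written multiplicatively). -/
abbrev Cyc (n : ℕ) := Multiplicative (ZMod n)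

/-!
Every element of `Hol N` factors uniquely as `λ_x ∘ φ` with `φ ∈ Aut N`, so `|Hol N| = |N| |Aut N|`.
For odd `n` the automorphisms of `D_{2n}` are exactly `r i ↦ r (a i)`, `sr i ↦ sr (b + a i)` with
`a` a unit of `ZMod n`, so `|Hol D_{2p²}| = 2p² · p² · p(p - 1) = 2(p - 1)p⁵`. Sending `λ_x ∘ φ` to
the multiplier `a` of `φ` reduced mod `p` and to the reflection sign of `x` is a surjective
homomorphism onto `(ZMod p)ˣ × ℤˣ`, whose kernel is therefore a normal subgroup of order `p⁵`:
the unique Sylow `p`-subgroup.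
-/

section Holomorph

variable {N : Type*} [Group N]

@[simp] lemma leftReg_apply (x y : N) : leftReg N x y = x * y := rfl

lemma leftReg_mem_hol (x : N) : leftReg N x ∈ Hol N :=
  Subgroup.le_normalizer ⟨x, rfl⟩

lemma apply_mul_of_mem_hol {g : Perm N} (hg : g ∈ Hol N) (x y : N) :
    g (x * y) = g x * (g 1)⁻¹ * g y := by
  obtain ⟨z, hz⟩ := (Subgroup.mem_normalizer_iff.mp hg (leftReg N x)).mp ⟨x, rfl⟩
  have hmul : ∀ y, g (x * y) = z * g y := fun y => by
    simpa using (congr($hz (g y))).symm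
  have hx := hmul 1
  rw [mul_one] at hx
  rw [hmul, hx]
  group

lemma mulAut_conj_leftReg (φ : MulAut N) (x : N) :
    φ.toEquiv * leftReg N x * (φ.toEquiv)⁻¹ = leftReg N (φ x) := by
  ext y
  simp

lemma mulAut_mem_hol (φ : MulAut N) : φ.toEquiv ∈ Hol N := by
  refine Subgroup.mem_normalizer_iff.mpr fun q => ⟨?_, ?_⟩
  · rintro ⟨x, rfl⟩
    exact ⟨φ x, (mulAut_conj_leftReg φ x).symm⟩
  · rintro ⟨y, hy⟩
    refine ⟨φ⁻¹ y, ?_⟩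
    rw [← mulAut_conj_leftReg, hy, show φ⁻¹.toEquiv = φ.toEquiv⁻¹ from rfl]
    group

def holToMulAut : Hol N →* MulAut N where
  toFun g := MulEquiv.mk' ((g : Perm N).trans (Equiv.mulLeft (g.1 1)⁻¹)) fun x y => by
    simp only [Equiv.trans_apply, Equiv.coe_mulLeft, apply_mul_of_mem_hol g.2 x y]
    group
  map_one' := by
    ext x
    change ((1 : Perm N) 1)⁻¹ * (1 : Perm N) x = x
    simp
  map_mul' g h := by
    ext x
    change (g.1 (h.1 1))⁻¹ * g.1 (h.1 x) = (g.1 1)⁻¹ * g.1 ((h.1 1)⁻¹ * h.1 x)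
    conv_lhs => rw [show h.1 x = h.1 1 * ((h.1 1)⁻¹ * h.1 x) by group, apply_mul_of_mem_hol g.2]
    group

def holEquivProd : Hol N ≃ N × MulAut N where
  toFun g := (g.1 1, holToMulAut g)
  invFun xφ := ⟨leftReg N xφ.1 * xφ.2.toEquiv,
    mul_mem (leftReg_mem_hol xφ.1) (mulAut_mem_hol xφ.2)⟩
  left_inv g := by
    ext y
    change g.1 1 * ((g.1 1)⁻¹ * g.1 y) = g.1 y
    group
  right_inv := fun (x, φ) => by
    ext y
    · simp
    · change (x * φ 1)⁻¹ * (x * φ y) = φ y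
      simp

lemma card_hol : Nat.card (Hol N) = Nat.card N * Nat.card (MulAut N) := by
  rw [Nat.card_congr holEquivProd, Nat.card_prod]

def holHomOfAutInvariant {A : Type*} [Monoid A] (χ : N →* A)
    (hχ : ∀ (φ : MulAut N) (x : N), χ (φ x) = χ x) : Hol N →* A where
  toFun g := χ (g.1 1)
  map_one' := by simp
  map_mul' g h := by
    change χ (g.1 (h.1 1)) = χ (g.1 1) * χ (h.1 1)
    rw [← hχ (holToMulAut g) (h.1 1), ← map_mul]
    congr 1
    change _ = g.1 1 * ((g.1 1)⁻¹ * g.1 (h.1 1))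
    group

end Holomorph

theorem Sylow.coe_eq_of_isPGroup_of_normal {G : Type*} [Group G] {p : ℕ} [Fact p.Prime]
    [Finite (Sylow p G)] {K : Subgroup G} [K.Normal] (hK : IsPGroup p K) (hindex : ¬ p ∣ K.index)
    (P : Sylow p G) : (P : Subgroup G) = K := by
  let Q := hK.toSylow hindex
  have hQ : (Q : Subgroup G) = K := hK.toSylow_coe hindex
  have := Sylow.unique_of_normal Q (hQ ▸ inferInstance)
  rw [Subsingleton.elim P Q, hQ]


namespace DihedralGroup

variable {n : ℕ}

def coord : DihedralGroup n → ZMod n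
  | r i => i
  | sr i => i

@[simp] lemma coord_r (i : ZMod n) : coord (r i) = i := rfl
@[simp] lemma coord_sr (i : ZMod n) : coord (sr i) = i := rfl

lemma orderOf_r_dvd (i : ZMod n) : orderOf (r i) ∣ n :=
  orderOf_dvd_of_pow_eq_one (by rw [r_pow, ZMod.natCast_self, mul_zero, r_zero])

lemma exists_eq_r_of_odd_orderOf {x : DihedralGroup n} (hx : Odd (orderOf x)) :
    ∃ i, x = r i := by
  rcases x with i | i
  · exact ⟨i, rfl⟩
  · rw [orderOf_sr] at hx
    exact absurd hx (by decide)

lemma exists_eq_sr_of_orderOf_eq_two (hn : Odd n) {x : DihedralGroup n} (hx : orderOf x = 2) :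
    ∃ i, x = sr i := by
  rcases x with i | i
  · have h2n : 2 ∣ n := hx ▸ orderOf_r_dvd i
    exact absurd (even_iff_two_dvd.mpr h2n) (Nat.not_even_iff_odd.mpr hn)
  · exact ⟨i, rfl⟩

lemma aut_r (hn : Odd n) (φ : MulAut (DihedralGroup n)) (i : ZMod n) :
    φ (r i) = r (coord (φ (r 1)) * i) := by
  obtain ⟨a, ha⟩ := exists_eq_r_of_odd_orderOf (x := φ (r 1))
    (by rwa [MulEquiv.orderOf_eq, orderOf_r_one])
  have hi : r i = r 1 ^ (i.cast : ℤ) := by rw [r_one_zpow, ZMod.intCast_zmod_cast]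
  rw [hi, map_zpow, ha, r_zpow, coord_r, ZMod.intCast_zmod_cast]

lemma aut_sr (hn : Odd n) (φ : MulAut (DihedralGroup n)) (i : ZMod n) :
    φ (sr i) = sr (coord (φ (sr 0)) + coord (φ (r 1)) * i) := by
  obtain ⟨b, hb⟩ := exists_eq_sr_of_orderOf_eq_two hn (x := φ (sr 0))
    (by rw [MulEquiv.orderOf_eq, orderOf_sr])
  rw [show sr i = sr 0 * r i by rw [sr_mul_r, zero_add], map_mul, hb, aut_r hn, sr_mul_r, coord_sr]

def multiplier (hn : Odd n) : MulAut (DihedralGroup n) →* ZMod n where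
  toFun φ := coord (φ (r 1))
  map_one' := rfl
  map_mul' φ ψ := by
    rw [MulAut.mul_apply, aut_r hn ψ, mul_one, aut_r hn φ, coord_r, coord_r]

def affineAut (a : (ZMod n)ˣ) (b : ZMod n) : MulAut (DihedralGroup n) where
  toFun
    | r i => r ((a : ZMod n) * i)
    | sr i => sr (b + (a : ZMod n) * i)
  invFun
    | r i => r (a⁻¹.val * i)
    | sr i => sr (a⁻¹.val * (i - b))
  left_inv x := by rcases x with i | i <;> simp
  right_inv x := by rcases x with i | i <;> simp
  map_mul' x y := by
    rcases x with i | i <;> rcases y with j | j <;>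
      simp only [r_mul_r, r_mul_sr, sr_mul_r, sr_mul_sr] <;> congr 1 <;> ring

@[simp] lemma affineAut_r (a : (ZMod n)ˣ) (b i : ZMod n) :
    affineAut a b (r i) = r ((a : ZMod n) * i) := rfl
@[simp] lemma affineAut_sr (a : (ZMod n)ˣ) (b i : ZMod n) :
    affineAut a b (sr i) = sr (b + (a : ZMod n) * i) := rfl

@[simp] lemma multiplier_apply (hn : Odd n) (φ : MulAut (DihedralGroup n)) :
    multiplier hn φ = coord (φ (r 1)) := rfl

lemma multiplier_affineAut (hn : Odd n) (a : (ZMod n)ˣ) (b : ZMod n) :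
    multiplier hn (affineAut a b) = a := by
  simp

def autEquiv (hn : Odd n) : MulAut (DihedralGroup n) ≃ (ZMod n)ˣ × ZMod n where
  toFun φ := ((multiplier hn).toHomUnits φ, coord (φ (sr 0)))
  invFun ab := affineAut ab.1 ab.2
  left_inv φ := by
    ext (i | i)
    · exact (affineAut_r _ _ _).trans (aut_r hn φ i).symm
    · exact (affineAut_sr _ _ _).trans (aut_sr hn φ i).symm
  right_inv ab := Prod.ext (Units.ext (multiplier_affineAut hn ab.1 ab.2)) (by simp)

lemma card_mulAut (hn : Odd n) : Nat.card (MulAut (DihedralGroup n)) = n * n.totient := by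
  have := NeZero.of_pos hn.pos
  rw [Nat.card_congr (autEquiv hn), Nat.card_prod, Nat.card_zmod, Nat.card_eq_fintype_card,
    ZMod.card_units_eq_totient, mul_comm]

def reflectionSign : DihedralGroup n →* ℤˣ where
  toFun
    | r _ => 1
    | sr _ => -1
  map_one' := rfl
  map_mul' x y := by
    rcases x with i | i <;> rcases y with j | j <;> simp [r_mul_r, r_mul_sr, sr_mul_r, sr_mul_sr]

lemma reflectionSign_aut (hn : Odd n) (φ : MulAut (DihedralGroup n)) (x : DihedralGroup n) :
    reflectionSign (φ x) = reflectionSign x := by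
  rcases x with i | i
  · rw [aut_r hn]; rfl
  · rw [aut_sr hn]; rfl

def holToUnitsProdSign {m : ℕ} (hn : Odd n) (hmn : m ∣ n) :
    Hol (DihedralGroup n) →* (ZMod m)ˣ × ℤˣ :=
  ((ZMod.unitsMap hmn).comp ((multiplier hn).toHomUnits.comp holToMulAut)).prod
    (holHomOfAutInvariant reflectionSign (reflectionSign_aut hn))

lemma holToUnitsProdSign_surjective {m : ℕ} (hn : Odd n) (hmn : m ∣ n) :
    Function.Surjective (holToUnitsProdSign hn hmn) := by
  have := NeZero.of_pos hn.pos
  rintro ⟨u, c⟩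
  obtain ⟨a, rfl⟩ := ZMod.unitsMap_surjective hmn u
  obtain ⟨x, rfl⟩ : ∃ x : DihedralGroup n, reflectionSign x = c := by
    rcases Int.units_eq_one_or c with rfl | rfl
    exacts [⟨r 0, rfl⟩, ⟨sr 0, rfl⟩]
  obtain ⟨g, hg⟩ := holEquivProd.surjective (x, affineAut a 0)
  refine ⟨g, Prod.ext ?_ ?_⟩
  · change ZMod.unitsMap hmn ((multiplier hn).toHomUnits (holEquivProd g).2) = _
    rw [hg]
    congr 1
    exact Units.ext (multiplier_affineAut hn a 0)
  · change reflectionSign (holEquivProd g).1 = _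
    rw [hg]

lemma index_ker_holToUnitsProdSign {p : ℕ} [Fact p.Prime] (hn : Odd n) (hpn : p ∣ n) :
    (holToUnitsProdSign hn hpn).ker.index = (p - 1) * 2 := by
  rw [Subgroup.index_ker, MonoidHom.range_eq_top.mpr (holToUnitsProdSign_surjective hn hpn),
    Subgroup.card_top, Nat.card_prod, Nat.card_eq_fintype_card, ZMod.card_units,
    Nat.card_eq_fintype_card, Fintype.card_units_int]

end DihedralGroup

/-- `Hol(D_{2p²})` has a unique (hence normal) Sylow `p`-subgroup, of order `p⁵`. -/
theorem statement2 (p : ℕ) (hp : p.Prime) (hodd : Odd p) :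
    Nat.card (Sylow p (Hol (DihedralGroup (p ^ 2)))) = 1 ∧
    ∀ P : Sylow p (Hol (DihedralGroup (p ^ 2))),
      (P : Subgroup (Hol (DihedralGroup (p ^ 2)))).Normal ∧
      Nat.card (P : Subgroup (Hol (DihedralGroup (p ^ 2)))) = p ^ 5 := by
  have := Fact.mk hp
  set F := DihedralGroup.holToUnitsProdSign hodd.pow (dvd_pow_self p two_ne_zero)
  have hindex : F.ker.index = (p - 1) * 2 := DihedralGroup.index_ker_holToUnitsProdSign _ _
  have hcard : Nat.card F.ker = p ^ 5 := by
    have hHol := F.ker.card_mul_index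
    rw [hindex, card_hol, DihedralGroup.nat_card, DihedralGroup.card_mulAut hodd.pow,
      Nat.totient_prime_pow hp two_pos] at hHol
    refine Nat.eq_of_mul_eq_mul_right (by have := hp.two_le; omega : 0 < (p - 1) * 2) ?_
    rw [hHol]
    ring
  have hcoprime : ¬ p ∣ F.ker.index := hindex ▸ hp.coprime_iff_not_dvd.mp
    (((Nat.coprime_self_sub_right hp.one_le).mpr (Nat.coprime_one_right p)).mul_right
      (Nat.coprime_two_right.mpr hodd))
  have hP := Sylow.coe_eq_of_isPGroup_of_normal (IsPGroup.of_card hcard) hcoprime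
  refine ⟨Nat.card_eq_one_iff_unique.mpr ⟨⟨fun P Q => Sylow.ext ((hP P).trans (hP Q).symm)⟩,
    inferInstance⟩, fun P => ?_⟩
  rw [hP P]
  exact ⟨F.normal_ker, hcard⟩
end

section
/- Let p be an odd prime. The holomorph Hol(C_p × C_{2p}) of the abelian group C_p × C_{2p} has exactly p² semiregular subgroups isomorphic to C_p × C_p. -/
open Equiv

/-- The group `C_p × C_p` (written multiplicatively). -/
abbrev Vp (p : ℕ) := Multiplicative (ZMod p × ZMod p)

/-- The action of `C_2` on `C_p × C_p` in which the generator acts by inversion. -/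
def actC2 (p : ℕ) : Multiplicative (ZMod 2) →* MulAut (Vp p) where
  toFun c := if Multiplicative.toAdd c = 0 then 1 else MulEquiv.inv (Vp p)
  map_one' := by simp
  map_mul' a b := by
    have h : ∀ x : ZMod 2, x = 0 ∨ x = 1 := by decide
    have hmul : Multiplicative.toAdd (a * b) = Multiplicative.toAdd a + Multiplicative.toAdd b := rfl
    have h11 : (1 : ZMod 2) + 1 = 0 := by decide
    have hinv : (1 : MulAut (Vp p)) = MulEquiv.inv (Vp p) * MulEquiv.inv (Vp p) := by
      refine MulEquiv.ext fun x => ?_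
      show x = (x⁻¹)⁻¹
      simp
    rcases h (Multiplicative.toAdd a) with ha | ha <;> rcases h (Multiplicative.toAdd b) with hb | hb <;>
      simp [hmul, ha, hb, h11, hinv]

/-- The semidirect product `(C_p × C_p) ⋊ C_2`, where the generator of `C_2`
acts by inversion. -/
abbrev GD (p : ℕ) := SemidirectProduct (Vp p) (Multiplicative (ZMod 2)) (actC2 p)

/-!
Write `C_p × C_{2p} ≅ V × C₂` with `V = 𝔽_p²`. As `p` is odd, every automorphism of `V × C₂` is
the identity on `C₂`, so an element of the holomorph acts by `(x, c) ↦ (t + T x, t' + c)` with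
`T ∈ GL(V)`. A subgroup `H ≅ C_p × C_p` has exponent `p`, hence `t' = 0`; being semiregular of
order `p²` it contains exactly one element `x ↦ u + T_u x` for each `u ∈ V`. Writing
`T_u = 1 + β(u, -)`, commutativity of `H` makes `β` symmetric and bilinear, and `T_u ^ p = 1` forces
`β(u, -)² = 0` on the plane `V`, which in turn gives `β(u, β(v, w)) = 0`. Conversely each such `β`
gives the subgroup of maps `x ↦ u + x + β(u, x)`, isomorphic to `(V, +)` via
`u ↦ u + β(u, u) / 2`. Finally such `β` are `0` and the maps `(u, v) ↦ f(u) f(v) e` with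
`f(e) = 0`, and there are `1 + (p + 1)(p - 1) = p²` of them.
-/

open Multiplicative

section Algebra

variable {p : ℕ} [Fact p.Prime] {V : Type*} [AddCommGroup V] [Module (ZMod p) V]

lemma zmod_two_eq_zero_or_one (a : ZMod 2) : a = 0 ∨ a = 1 := by
  revert a; decide

lemma eq_zero_of_add_self_eq_zero (h2 : (2 : ZMod p) ≠ 0) {v : V} (hv : v + v = 0) : v = 0 := by
  rw [← two_smul (ZMod p)] at hv
  exact (smul_eq_zero.mp hv).resolve_left h2

lemma half_add_half (h2 : (2 : ZMod p) ≠ 0) (v : V) :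
    (2⁻¹ : ZMod p) • v + (2⁻¹ : ZMod p) • v = v := by
  rw [← two_smul (ZMod p), smul_smul, mul_inv_cancel₀ h2, one_smul]

lemma eq_neg_div_smul_of_smul_add_smul_eq_zero {M : Type*} [AddCommGroup M] [Module (ZMod p) M]
    {a b : ZMod p} (hb : b ≠ 0) {X Y : M} (h : a • X + b • Y = 0) : Y = (-a / b) • X := by
  rw [div_eq_inv_mul, mul_smul, neg_smul, ← eq_neg_of_add_eq_zero_right h, smul_smul,
    inv_mul_cancel₀ hb, one_smul]

end Algebra

lemma pow_finrank_eq_zero_of_isNilpotent {K M : Type*} [Field K] [AddCommGroup M] [Module K M]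
    [FiniteDimensional K M] {φ : Module.End K M} (h : IsNilpotent φ) :
    φ ^ Module.finrank K M = 0 := by
  simpa [h.charpoly_eq_X_pow_finrank] using φ.aeval_self_charpoly

lemma sq_add_add_mul_of_commute {R : Type*} [Ring R] {a b : R} (hab : Commute a b)
    (ha : a ^ 2 = 0) (hb : b ^ 2 = 0) : (a + b + a * b) ^ 2 = 2 * (a * b) := by
  rw [sq] at ha hb ⊢
  have hba : b * a = a * b := hab.eq.symm
  have haab : a * (a * b) = 0 := by rw [← mul_assoc, ha, zero_mul]
  have haba : a * b * a = 0 := by rw [mul_assoc, hba, haab]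
  have habb : a * b * b = 0 := by rw [mul_assoc, hb, mul_zero]
  have hbab : b * (a * b) = 0 := by rw [← mul_assoc, hba, habb]
  have habab : a * b * (a * b) = 0 := by rw [← mul_assoc, haba, zero_mul]
  simp only [add_mul, mul_add, ha, hb, haab, haba, habb, hbab, habab, hba, two_mul, add_zero,
    zero_add]

section ElementaryAbelian

variable {p : ℕ} {V : Type*} [AddCommGroup V] [Module (ZMod p) V] {G : Type*} [Group G]
  {H : Subgroup G}

lemma pow_eq_one_of_mulEquiv (e : H ≃* Multiplicative V) {g : G} (hg : g ∈ H) : g ^ p = 1 := by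
  have : (⟨g, hg⟩ : H) ^ p = 1 := e.injective <| by
    rw [map_pow, map_one, ← ofAdd_toAdd (e _), ← ofAdd_nsmul, ZModModule.char_nsmul_eq_zero,
      ofAdd_zero]
  simpa using congrArg Subtype.val this

lemma mul_comm_of_mulEquiv (e : H ≃* Multiplicative V) {g h : G} (hg : g ∈ H) (hh : h ∈ H) :
    g * h = h * g :=
  congrArg Subtype.val (e.injective (by rw [map_mul, map_mul, mul_comm]) :
    (⟨g, hg⟩ * ⟨h, hh⟩ : H) = ⟨h, hh⟩ * ⟨g, hg⟩)

end ElementaryAbelian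

section Holomorph

variable {G : Type*} [Group G]

def affinePerm (v : G) (φ : G ≃* G) : Perm G :=
  φ.toEquiv.trans (Equiv.mulLeft v)

@[simp]
lemma affinePerm_apply (v : G) (φ : G ≃* G) (x : G) : affinePerm v φ x = v * φ x := rfl

lemma affinePerm_mem_Hol (v : G) (φ : G ≃* G) : affinePerm v φ ∈ Hol G := by
  rw [Hol, Subgroup.mem_normalizer_iff_map_conj_eq, MonoidHom.map_range]
  have hconj : (MulAut.conj (affinePerm v φ) : Perm G →* Perm G).comp (leftReg G) =
      (leftReg G).comp ((MulAut.conj v).toMonoidHom.comp φ.toMonoidHom) := by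
    ext n x
    have : φ ((affinePerm v φ).symm x) = v⁻¹ * x := by
      rw [eq_inv_mul_iff_mul_eq, ← affinePerm_apply, Equiv.apply_symm_apply]
    simp [leftReg, MulAction.toPermHom, mul_assoc, this]
  rw [hconj, MonoidHom.range_comp, MonoidHom.range_eq_top.mpr, ← MonoidHom.range_eq_map]
  exact (MulAut.conj v).surjective.comp φ.surjective

lemma apply_mul_of_mem_Hol {g : Perm G} (hg : g ∈ Hol G) (n x : G) :
    g (n * x) = g n * (g 1)⁻¹ * g x := by
  obtain ⟨m, hm⟩ := (Subgroup.mem_normalizer_iff.mp hg (leftReg G n)).mp ⟨n, rfl⟩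
  have key : ∀ y, g (n * y) = m * g y := fun y => by
    simpa [leftReg, MulAction.toPermHom] using (congrArg (· (g y)) hm).symm
  have h1 := key 1
  rw [mul_one] at h1
  rw [key, h1, mul_inv_cancel_right]

def holAut : Hol G →* Monoid.End G where
  toFun g :=
    { toFun x := ((g : Perm G) 1)⁻¹ * (g : Perm G) x
      map_one' := inv_mul_cancel _
      map_mul' x y := by rw [apply_mul_of_mem_Hol g.2]; group }
  map_one' := by ext x; change (1 : G)⁻¹ * x = x; rw [inv_one, one_mul]
  map_mul' g h := by
    ext x
    change ((g : Perm G) ((h : Perm G) 1))⁻¹ * (g : Perm G) ((h : Perm G) x) =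
      ((g : Perm G) 1)⁻¹ * (g : Perm G) (((h : Perm G) 1)⁻¹ * (h : Perm G) x)
    conv_lhs => rw [← mul_inv_cancel_left ((h : Perm G) 1) ((h : Perm G) x),
      apply_mul_of_mem_Hol g.2]
    group

lemma apply_eq_mul_holAut (g : Hol G) (x : G) : (g : Perm G) x = (g : Perm G) 1 * holAut g x :=
  (mul_inv_cancel_left _ _).symm

lemma holAut_injective (g : Hol G) : Function.Injective (holAut g) := fun _ _ hxy =>
  (g : Perm G).injective (mul_left_cancel hxy)

end Holomorph

section Transport

variable {N N' : Type*} [Group N] [Group N']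

lemma permCongrHom_leftReg (e : N ≃* N') (n : N) :
    permCongrHom e.toEquiv (leftReg N n) = leftReg N' (e n) := by
  ext x
  simp [permCongrHom, leftReg, MulAction.toPermHom]

lemma map_permCongrHom_Hol (e : N ≃* N') :
    (Hol N).map (permCongrHom e.toEquiv).toMonoidHom = Hol N' := by
  rw [Hol, Hol, Subgroup.map_equiv_normalizer_eq, MonoidHom.range_eq_map, Subgroup.map_map]
  congr
  have : (permCongrHom e.toEquiv).toMonoidHom.comp (leftReg N) =
      (leftReg N').comp e.toMonoidHom := by
    ext n : 1
    exact permCongrHom_leftReg e n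
  rw [this, ← Subgroup.map_map, ← MonoidHom.range_eq_map,
    MonoidHom.range_eq_top.mpr e.surjective, ← MonoidHom.range_eq_map]

lemma IsSemiregular.map_permCongrHom (e : N ≃* N') {H : Subgroup (Perm N)}
    (hH : IsSemiregular H) :
    IsSemiregular (H.map (permCongrHom e.toEquiv).toMonoidHom) := by
  rintro _ ⟨g, hg, rfl⟩ hne x hx
  refine hH g hg (by rintro rfl; exact hne (map_one _)) (e.symm x) ?_
  simpa [permCongrHom, ← e.eq_symm_apply] using hx

theorem card_semiregular_congr (e : N ≃* N') (K : Type*) [Group K] :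
    Nat.card {H : Subgroup (Perm N) // H ≤ Hol N ∧ IsSemiregular H ∧ Nonempty (H ≃* K)} =
    Nat.card {H : Subgroup (Perm N') // H ≤ Hol N' ∧ IsSemiregular H ∧ Nonempty (H ≃* K)} := by
  set σ := permCongrHom e.toEquiv
  refine Nat.card_congr (Equiv.subtypeEquiv σ.mapSubgroup.toEquiv fun H => ?_)
  change _ ↔ H.map σ.toMonoidHom ≤ _ ∧ IsSemiregular (H.map σ.toMonoidHom) ∧
    Nonempty (H.map σ.toMonoidHom ≃* K)
  have hback : (H.map σ.toMonoidHom).map (permCongrHom e.symm.toEquiv).toMonoidHom = H := by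
    rw [Subgroup.map_map]
    convert Subgroup.map_id H
    ext g x
    simp [σ, permCongrHom]
  rw [← map_permCongrHom_Hol e, Subgroup.map_le_map_iff_of_injective σ.injective]
  refine and_congr_right fun _ => and_congr ⟨fun h => h.map_permCongrHom e, fun h => ?_⟩ ?_
  · have := h.map_permCongrHom e.symm
    rwa [hback] at this
  · exact ⟨fun ⟨ψ⟩ => ⟨(H.equivMapOfInjective _ σ.injective).symm.trans ψ⟩,
      fun ⟨ψ⟩ => ⟨(H.equivMapOfInjective _ σ.injective).trans ψ⟩⟩

end Transport

section ProdZModTwo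

variable {p : ℕ} [Fact p.Prime] {V : Type*} [AddCommGroup V] [Module (ZMod p) V]

lemma apply_prod_zmod_two (h2 : (2 : ZMod p) ≠ 0) (ψ : V × ZMod 2 →+ V × ZMod 2)
    (hψ : Function.Injective ψ) (v : V) (c : ZMod 2) : ψ (v, c) = ((ψ (v, 0)).1, c) := by
  have hv : (ψ (v, 0)).2 = 0 := by
    have : ψ (v, 0) = ψ ((2⁻¹ : ZMod p) • v, 0) + ψ ((2⁻¹ : ZMod p) • v, 0) := by
      rw [← map_add, Prod.mk_add_mk, half_add_half h2, add_zero]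
    rw [this, Prod.snd_add, CharTwo.add_self_eq_zero]
  have hz : ψ (0, 1) = (0, 1) := by
    have hsum : ψ (0, 1) + ψ (0, 1) = 0 := by
      rw [← map_add, Prod.mk_add_mk, add_zero, CharTwo.add_self_eq_zero, Prod.mk_zero_zero,
        map_zero]
    have hne : (ψ (0, 1)).2 ≠ 0 := fun h => by
      have : ψ (0, 1) = 0 := Prod.ext (eq_zero_of_add_self_eq_zero h2 (congrArg Prod.fst hsum)) h
      exact one_ne_zero (congrArg Prod.snd (hψ (this.trans (map_zero ψ).symm)))
    exact Prod.ext (eq_zero_of_add_self_eq_zero h2 (congrArg Prod.fst hsum))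
      ((zmod_two_eq_zero_or_one _).resolve_left hne)
  rcases zmod_two_eq_zero_or_one c with rfl | rfl
  · exact Prod.ext rfl hv
  · have : ((v, 1) : V × ZMod 2) = (v, 0) + (0, 1) := by simp
    rw [this, map_add, hz, Prod.mk_add_mk, hv, zero_add, add_zero]

def holLinear (h2 : (2 : ZMod p) ≠ 0) :
    Hol (Multiplicative (V × ZMod 2)) →* Module.End (ZMod p) V where
  toFun g := AddMonoidHom.toZModLinearMap p ((AddMonoidHom.fst V (ZMod 2)).comp
    ((AddMonoidHom.toMultiplicative.symm (holAut g)).comp (AddMonoidHom.inl V (ZMod 2))))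
  map_one' := by ext v; simp; rfl
  map_mul' g h := by
    ext v
    have hψ : Function.Injective (AddMonoidHom.toMultiplicative.symm (holAut h)) :=
      holAut_injective h
    rw [map_mul holAut g h]
    change (AddMonoidHom.toMultiplicative.symm (holAut g)
      (AddMonoidHom.toMultiplicative.symm (holAut h) (v, 0))).1 = _
    rw [apply_prod_zmod_two h2 _ hψ]
    rfl

lemma toAdd_apply_ofAdd (h2 : (2 : ZMod p) ≠ 0) (g : Hol (Multiplicative (V × ZMod 2))) (v : V)
    (c : ZMod 2) :
    toAdd (g.1 (ofAdd (v, c))) = toAdd (g.1 1) + (holLinear h2 g v, c) := by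
  rw [apply_eq_mul_holAut g, toAdd_mul]
  congr 1
  exact apply_prod_zmod_two h2 (AddMonoidHom.toMultiplicative.symm (holAut g))
    (holAut_injective g) v c

def translation (g : Perm (Multiplicative (V × ZMod 2))) : V := (toAdd (g 1)).1

lemma snd_toAdd_pow_apply_one (h2 : (2 : ZMod p) ≠ 0) (g : Hol (Multiplicative (V × ZMod 2)))
    (n : ℕ) :
    (toAdd ((g ^ n).1 1)).2 = n • (toAdd (g.1 1)).2 := by
  induction n with
  | zero => rfl
  | succ n ih =>
    rw [pow_succ', Subgroup.coe_mul, Perm.mul_apply, ← ofAdd_toAdd ((g ^ n).1 1),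
      toAdd_apply_ofAdd h2, Prod.snd_add, ih, succ_nsmul']

lemma snd_toAdd_apply_one_eq_zero (h2 : (2 : ZMod p) ≠ 0) (hodd : Odd p)
    (g : Hol (Multiplicative (V × ZMod 2))) (hg : g ^ p = 1) : (toAdd (g.1 1)).2 = 0 := by
  have h := snd_toAdd_pow_apply_one h2 g p
  rwa [hg, nsmul_eq_mul, hodd.natCast_zmod_two, one_mul, eq_comm] at h

lemma toAdd_apply_ofAdd_of_snd_eq_zero (h2 : (2 : ZMod p) ≠ 0)
    (g : Hol (Multiplicative (V × ZMod 2))) (hg : (toAdd (g.1 1)).2 = 0) (v : V)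
    (c : ZMod 2) :
    toAdd (g.1 (ofAdd (v, c))) = (translation g.1 + holLinear h2 g v, c) := by
  rw [toAdd_apply_ofAdd h2, Prod.add_def, hg, zero_add]
  rfl

lemma translation_mul (h2 : (2 : ZMod p) ≠ 0) (g h : Hol (Multiplicative (V × ZMod 2))) :
    translation (g * h).1 = translation g.1 + holLinear h2 g (translation h.1) := by
  rw [translation, Subgroup.coe_mul, Perm.mul_apply, ← ofAdd_toAdd (h.1 1),
    toAdd_apply_ofAdd h2]
  rfl

end ProdZModTwo

section CommCubeZero

variable {p : ℕ} {V : Type*} [AddCommGroup V] [Module (ZMod p) V]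
  {β : V →ₗ[ZMod p] V →ₗ[ZMod p] V}

/-- `β` is the multiplication of a commutative algebra structure on `V` in which every product of
three elements vanishes. -/
structure IsCommCubeZero (β : V →ₗ[ZMod p] V →ₗ[ZMod p] V) : Prop where
  comm : ∀ u v, β u v = β v u
  mul_mul : ∀ u v w, β u (β v w) = 0

lemma IsCommCubeZero.mul_mul_left (hβ : IsCommCubeZero β) (u v w : V) : β (β u v) w = 0 := by
  rw [hβ.comm]; exact hβ.mul_mul w u v

def circleAut (hβ : IsCommCubeZero β) (u : V) : V × ZMod 2 ≃+ V × ZMod 2 where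
  toFun m := (m.1 + β u m.1, m.2)
  invFun m := (m.1 - β u m.1, m.2)
  left_inv m := by simp [hβ.mul_mul]
  right_inv m := by simp [hβ.mul_mul]
  map_add' m m' := by simp only [Prod.fst_add, Prod.snd_add, map_add]; ext <;> simp; abel

/-- Left multiplication by `u` in the circle group `u ∘ x = u + x + β u x` on `V`, extended by the
identity on `C₂`. -/
def circlePerm (hβ : IsCommCubeZero β) (u : V) : Perm (Multiplicative (V × ZMod 2)) :=
  affinePerm (ofAdd (u, 0)) (AddEquiv.toMultiplicative (circleAut hβ u))

lemma circlePerm_ofAdd (hβ : IsCommCubeZero β) (u x : V) (c : ZMod 2) :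
    circlePerm hβ u (ofAdd (x, c)) = ofAdd (u + x + β u x, c) := by
  simp [circlePerm, circleAut, add_assoc, ← ofAdd_add]

lemma circlePerm_mul (hβ : IsCommCubeZero β) (u w : V) :
    circlePerm hβ u * circlePerm hβ w = circlePerm hβ (u + w + β u w) := by
  ext1 m
  obtain ⟨⟨x, c⟩, rfl⟩ := ofAdd.surjective m
  simp only [Perm.mul_apply, circlePerm_ofAdd, map_add, LinearMap.add_apply, hβ.mul_mul,
    hβ.mul_mul_left]
  congr 2
  abel

lemma circlePerm_zero (hβ : IsCommCubeZero β) : circlePerm hβ 0 = 1 := by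
  ext1 m
  obtain ⟨⟨x, c⟩, rfl⟩ := ofAdd.surjective m
  simp [circlePerm_ofAdd]

lemma circlePerm_injective (hβ : IsCommCubeZero β) : Function.Injective (circlePerm hβ) := by
  intro u w h
  simpa [circlePerm_ofAdd] using congrArg (fun g => (toAdd (g (ofAdd (0, 0)))).1) h

def circleSubgroup (hβ : IsCommCubeZero β) : Subgroup (Perm (Multiplicative (V × ZMod 2))) where
  carrier := Set.range (circlePerm hβ)
  mul_mem' := by
    rintro _ _ ⟨u, rfl⟩ ⟨w, rfl⟩
    exact ⟨_, (circlePerm_mul hβ u w).symm⟩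
  one_mem' := ⟨0, circlePerm_zero hβ⟩
  inv_mem' := by
    rintro _ ⟨u, rfl⟩
    refine ⟨-u + β u u, eq_inv_iff_mul_eq_one.mpr ?_⟩
    rw [circlePerm_mul, ← circlePerm_zero hβ]
    simp [hβ.mul_mul_left]

lemma mem_circleSubgroup (hβ : IsCommCubeZero β) {g : Perm (Multiplicative (V × ZMod 2))} :
    g ∈ circleSubgroup hβ ↔ ∃ u, circlePerm hβ u = g := Iff.rfl

lemma circleSubgroup_le_Hol (hβ : IsCommCubeZero β) :
    circleSubgroup hβ ≤ Hol (Multiplicative (V × ZMod 2)) := by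
  rintro _ ⟨u, rfl⟩
  exact affinePerm_mem_Hol _ _

lemma isSemiregular_circleSubgroup (hβ : IsCommCubeZero β) : IsSemiregular (circleSubgroup hβ) := by
  rintro _ ⟨u, rfl⟩ hne m hm
  obtain ⟨⟨x, c⟩, rfl⟩ := ofAdd.surjective m
  have hux : u + β u x = 0 := by
    simpa [circlePerm_ofAdd, add_right_comm u x] using hm
  have hu : u = -β u x := eq_neg_of_add_eq_zero_left hux
  have : β u x = 0 := by
    rw [hu, map_neg, LinearMap.neg_apply, hβ.mul_mul_left, neg_zero]
  rw [this, neg_zero] at hu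
  exact hne (hu ▸ circlePerm_zero hβ)

lemma circleSubgroup_injective :
    Function.Injective fun β : {β : V →ₗ[ZMod p] V →ₗ[ZMod p] V // IsCommCubeZero β} =>
      circleSubgroup β.2 := by
  rintro ⟨β, hβ⟩ ⟨β', hβ'⟩ h
  ext u x
  have h' : circleSubgroup hβ = circleSubgroup hβ' := h
  obtain ⟨w, hw⟩ : circlePerm hβ u ∈ circleSubgroup hβ' := h' ▸ ⟨u, rfl⟩
  obtain rfl : w = u := by
    simpa [circlePerm_ofAdd] using congrArg (fun g => (toAdd (g (ofAdd (0, 0)))).1) hw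
  simpa [circlePerm_ofAdd] using (congrArg (fun g => (toAdd (g (ofAdd (x, 0)))).1) hw).symm

end CommCubeZero

section CircleExp

variable {p : ℕ} [Fact p.Prime] {V : Type*} [AddCommGroup V] [Module (ZMod p) V]
  {β : V →ₗ[ZMod p] V →ₗ[ZMod p] V}

/-- An isomorphism from `(V, +)` onto the circle group: a truncated exponential, as `β` vanishes on
products. -/
def circleExp (β : V →ₗ[ZMod p] V →ₗ[ZMod p] V) (u : V) : V := u + (2⁻¹ : ZMod p) • β u u

lemma map_circleExp_circleExp (hβ : IsCommCubeZero β) (u w : V) :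
    β (circleExp β u) (circleExp β w) = β u w := by
  simp [circleExp, hβ.mul_mul, hβ.mul_mul_left]

lemma circleExp_add (h2 : (2 : ZMod p) ≠ 0) (hβ : IsCommCubeZero β) (u w : V) :
    circleExp β (u + w) = circleExp β u + circleExp β w + β (circleExp β u) (circleExp β w) := by
  rw [map_circleExp_circleExp hβ]
  conv_rhs => rw [← half_add_half h2 (β u w)]
  simp only [circleExp, map_add, LinearMap.add_apply, smul_add, hβ.comm w u]
  abel

lemma circleExp_bijective (hβ : IsCommCubeZero β) : Function.Bijective (circleExp β) := by
  refine ⟨fun u w h => ?_, fun u => ⟨u - (2⁻¹ : ZMod p) • β u u, ?_⟩⟩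
  · have hsq : β u u = β w w := by
      rw [← map_circleExp_circleExp hβ u u, h, map_circleExp_circleExp hβ]
    simpa [circleExp, hsq] using h
  · simp [circleExp, hβ.mul_mul, hβ.mul_mul_left]

def circleHom (h2 : (2 : ZMod p) ≠ 0) (hβ : IsCommCubeZero β) :
    Multiplicative V →* Perm (Multiplicative (V × ZMod 2)) where
  toFun a := circlePerm hβ (circleExp β (toAdd a))
  map_one' := by simp [circleExp, circlePerm_zero]
  map_mul' a b := by rw [toAdd_mul, circleExp_add h2 hβ, circlePerm_mul]

lemma nonempty_circleSubgroup_mulEquiv (h2 : (2 : ZMod p) ≠ 0) (hβ : IsCommCubeZero β) :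
    Nonempty (circleSubgroup hβ ≃* Multiplicative V) := by
  have hinj : Function.Injective (circleHom h2 hβ) :=
    (circlePerm_injective hβ).comp ((circleExp_bijective hβ).injective.comp toAdd.injective)
  have hrange : (circleHom h2 hβ).range = circleSubgroup hβ := by
    ext g
    simp only [MonoidHom.mem_range, mem_circleSubgroup]
    constructor
    · rintro ⟨a, rfl⟩
      exact ⟨_, rfl⟩
    · rintro ⟨u, rfl⟩
      obtain ⟨w, rfl⟩ := (circleExp_bijective hβ).surjective u
      exact ⟨ofAdd w, rfl⟩
  exact ⟨((MonoidHom.ofInjective hinj).trans (MulEquiv.subgroupCongr hrange)).symm⟩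

end CircleExp

section AffineFamilies

variable {p : ℕ} [Fact p.Prime] {V : Type*} [AddCommGroup V] [Module (ZMod p) V]
  [FiniteDimensional (ZMod p) V]

lemma sub_one_sq_eq_zero (hV : Module.finrank (ZMod p) V = 2) {T : Module.End (ZMod p) V}
    (hT : T ^ p = 1) : (T - 1) ^ 2 = 0 := by
  have : Nontrivial V := Module.nontrivial_of_finrank_eq_succ hV
  have : CharP (Module.End (ZMod p) V) p :=
    charP_of_injective_algebraMap (algebraMap (ZMod p) _).injective p
  rw [← hV]
  refine pow_finrank_eq_zero_of_isNilpotent ⟨p, ?_⟩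
  rw [sub_pow_char_of_commute _ (Commute.one_right T), hT, one_pow, sub_self]

/-- With `T u = 1 + D u`: `T u ^ p = 1` makes `D u` nilpotent, hence `D u ^ 2 = 0` on the plane `V`,
and expanding `D (u ∘ w) ^ 2 = 0` gives `D u * D w = 0`. -/
theorem exists_isCommCubeZero_of_affine (h2 : (2 : ZMod p) ≠ 0)
    (hV : Module.finrank (ZMod p) V = 2) (T : V → Module.End (ZMod p) V)
    (hmul : ∀ u w, T u * T w = T (u + T u w)) (hcomm : ∀ u w, u + T u w = w + T w u)
    (hpow : ∀ u, T u ^ p = 1) :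
    ∃ β : V →ₗ[ZMod p] V →ₗ[ZMod p] V, IsCommCubeZero β ∧ ∀ u v, T u v = v + β u v := by
  set D : V → Module.End (ZMod p) V := fun u => T u - 1
  have hT : ∀ u, T u = 1 + D u := fun u => (add_sub_cancel 1 (T u)).symm
  have hsymm : ∀ u w, D u w = D w u := fun u w =>
    calc D u w = (u + T u w) - u - w := by simp [D]
      _ = (w + T w u) - u - w := by rw [hcomm]
      _ = D w u := by simp [D]; abel
  have hsq : ∀ u, D u ^ 2 = 0 := fun u => sub_one_sq_eq_zero hV (hpow u)
  have hcirc : ∀ u w, D (u + w + D u w) = D u + D w + D u * D w := fun u w => by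
    have h := hmul u w
    rw [show u + T u w = u + w + D u w by simp [D]] at h
    calc D (u + w + D u w) = T (u + w + D u w) - 1 := rfl
      _ = (1 + D u) * (1 + D w) - 1 := by rw [← h, ← hT, ← hT]
      _ = D u + D w + D u * D w := by noncomm_ring
  have hcommute : ∀ u w, Commute (D u) (D w) := fun u w => by
    have h := hcirc u w
    rw [hsymm, add_comm u w, hcirc w u, add_comm (D w) (D u)] at h
    exact (add_left_cancel h).symm
  have hprod : ∀ u w, D u * D w = 0 := fun u w => by
    have h := hsq (u + w + D u w)
    rw [hcirc, sq_add_add_mul_of_commute (hcommute u w) (hsq u) (hsq w), two_mul] at h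
    exact eq_zero_of_add_self_eq_zero h2 h
  let β : V →ₗ[ZMod p] V →ₗ[ZMod p] V := LinearMap.mk₂ (ZMod p) (fun u v => D u v)
    (fun u u' v => by rw [hsymm, map_add, hsymm v, hsymm v])
    (fun c u v => by rw [hsymm, map_smul, hsymm])
    (fun u v v' => map_add _ _ _) (fun c u v => map_smul _ _ _)
  refine ⟨β, ⟨hsymm, fun u v w => congrArg (· w) (hprod u v)⟩, fun u v => ?_⟩
  change T u v = v + D u v
  rw [hT]
  rfl

end AffineFamilies

section RegularSubgroups

variable {p : ℕ} [Fact p.Prime] {V : Type*} [AddCommGroup V] [Module (ZMod p) V]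
  {H : Subgroup (Perm (Multiplicative (V × ZMod 2)))}

lemma snd_toAdd_apply_one_eq_zero_of_mem (h2 : (2 : ZMod p) ≠ 0) (hodd : Odd p)
    (hH : H ≤ Hol _) (e : H ≃* Multiplicative V) (g : H) : (toAdd (g.1 1)).2 = 0 :=
  snd_toAdd_apply_one_eq_zero h2 hodd (Subgroup.inclusion hH g)
    (Subtype.ext (pow_eq_one_of_mulEquiv e g.2))

lemma bijective_translation [Finite V] (h2 : (2 : ZMod p) ≠ 0) (hodd : Odd p) (hH : H ≤ Hol _)
    (hsemi : IsSemiregular H) (e : H ≃* Multiplicative V) :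
    Function.Bijective fun g : H => translation g.1 := by
  refine (Nat.bijective_iff_injective_and_card _).mpr ⟨fun g h hgh => ?_, Nat.card_congr e.toEquiv⟩
  have hsnd := snd_toAdd_apply_one_eq_zero_of_mem h2 hodd hH e
  have h1 : g.1 1 = h.1 1 := toAdd.injective (Prod.ext hgh ((hsnd g).trans (hsnd h).symm))
  by_contra hne
  refine hsemi (h⁻¹ * g).1 (h⁻¹ * g).2 ?_ 1 ?_
  · rwa [Subgroup.coe_mul, Subgroup.coe_inv, Ne, inv_mul_eq_one, eq_comm, ← Subtype.ext_iff]
  · simp [Perm.mul_apply, h1]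

theorem exists_circleSubgroup_eq [Finite V] [FiniteDimensional (ZMod p) V]
    (h2 : (2 : ZMod p) ≠ 0) (hodd : Odd p) (hV : Module.finrank (ZMod p) V = 2)
    (hH : H ≤ Hol _) (hsemi : IsSemiregular H) (e : H ≃* Multiplicative V) :
    ∃ (β : V →ₗ[ZMod p] V →ₗ[ZMod p] V) (hβ : IsCommCubeZero β), circleSubgroup hβ = H := by
  let L : H →* Module.End (ZMod p) V := (holLinear h2).comp (Subgroup.inclusion hH)
  have hformula : ∀ (g : H) v c, toAdd (g.1 (ofAdd (v, c))) = (translation g.1 + L g v, c) :=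
    fun g => toAdd_apply_ofAdd_of_snd_eq_zero h2 (Subgroup.inclusion hH g)
      (snd_toAdd_apply_one_eq_zero_of_mem h2 hodd hH e g)
  have htransl : ∀ g h : H, translation (g * h).1 = translation g.1 + L g (translation h.1) :=
    fun g h => translation_mul h2 (Subgroup.inclusion hH g) (Subgroup.inclusion hH h)
  have hbij := bijective_translation h2 hodd hH hsemi e
  set s := (Equiv.ofBijective _ hbij).symm
  have hs : ∀ u, translation (s u).1 = u := (Equiv.ofBijective _ hbij).apply_symm_apply
  have hmul : ∀ u w, s u * s w = s (u + L (s u) w) := fun u w =>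
    hbij.1 (by simp only [htransl, hs])
  have hcomm : ∀ u w, u + L (s u) w = w + L (s w) u := fun u w =>
    calc u + L (s u) w = translation (s u * s w).1 := by rw [htransl, hs, hs]
      _ = translation (s w * s u).1 := by
        rw [Subgroup.coe_mul, Subgroup.coe_mul, mul_comm_of_mulEquiv e (s u).2 (s w).2]
      _ = w + L (s w) u := by rw [htransl, hs, hs]
  obtain ⟨β, hβ, hLβ⟩ := exists_isCommCubeZero_of_affine h2 hV (fun u => L (s u))
    (fun u w => by rw [← hmul, map_mul]) hcomm
    (fun u => by
      rw [← map_pow, show s u ^ p = 1 from Subtype.ext (pow_eq_one_of_mulEquiv e (s u).2), map_one])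
  have hβs : ∀ u, circlePerm hβ u = (s u).1 := fun u => by
    ext1 m
    obtain ⟨⟨x, c⟩, rfl⟩ := ofAdd.surjective m
    apply toAdd.injective
    rw [hformula, hLβ, hs, circlePerm_ofAdd, toAdd_ofAdd, add_assoc]
  refine ⟨β, hβ, le_antisymm ?_ fun g hg => ⟨translation g, ?_⟩⟩
  · rintro _ ⟨u, rfl⟩
    exact hβs u ▸ (s u).2
  · rw [hβs]
    exact congrArg Subtype.val ((Equiv.ofBijective _ hbij).symm_apply_apply ⟨g, hg⟩)

end RegularSubgroups

def sqSmul {R V : Type*} [CommRing R] [AddCommGroup V] [Module R V] (f : V →ₗ[R] R) (e : V) :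
    V →ₗ[R] V →ₗ[R] V :=
  ((LinearMap.mul R R).compl₁₂ f f).compr₂ (LinearMap.toSpanSingleton R V e)

@[simp]
lemma sqSmul_apply {R V : Type*} [CommRing R] [AddCommGroup V] [Module R V] (f : V →ₗ[R] R)
    (e u v : V) : sqSmul f e u v = (f u * f v) • e := rfl

section Count

variable {p : ℕ} [Fact p.Prime]

local notation "𝕍" => ZMod p × ZMod p

lemma isCommCubeZero_sqSmul {V : Type*} [AddCommGroup V] [Module (ZMod p) V]
    {f : V →ₗ[ZMod p] ZMod p} {e : V} (hfe : f e = 0) : IsCommCubeZero (sqSmul f e) :=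
  ⟨fun u v => by rw [sqSmul_apply, sqSmul_apply, mul_comm], fun u v w => by simp [hfe]⟩

lemma apply_eq_fst_smul_add_snd_smul (β : 𝕍 →ₗ[ZMod p] 𝕍 →ₗ[ZMod p] 𝕍) (u v : 𝕍) :
    β u v = v.1 • β u (1, 0) + v.2 • β u (0, 1) := by
  conv_lhs => rw [show v = v.1 • (1, 0) + v.2 • (0, 1) by ext <;> simp]
  rw [map_add, map_smul, map_smul]

lemma ext_of_comm_of_basis {β γ : 𝕍 →ₗ[ZMod p] 𝕍 →ₗ[ZMod p] 𝕍} (hβ : ∀ u v, β u v = β v u)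
    (hγ : ∀ u v, γ u v = γ v u) (h₁₁ : β (1, 0) (1, 0) = γ (1, 0) (1, 0))
    (h₁₂ : β (1, 0) (0, 1) = γ (1, 0) (0, 1)) (h₂₂ : β (0, 1) (0, 1) = γ (0, 1) (0, 1)) :
    β = γ := by
  ext <;> simp [h₁₁, h₁₂, h₂₂, hβ (0, 1) (1, 0), hγ (0, 1) (1, 0)]

lemma IsCommCubeZero.fst_smul_add_snd_smul {β : 𝕍 →ₗ[ZMod p] 𝕍 →ₗ[ZMod p] 𝕍}
    (hβ : IsCommCubeZero β) (w u v : 𝕍) :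
    (β u v).1 • β w (1, 0) + (β u v).2 • β w (0, 1) = 0 := by
  rw [← apply_eq_fst_smul_add_snd_smul, hβ.mul_mul]

lemma IsCommCubeZero.eq_sqSmul_of_snd_ne_zero {β : 𝕍 →ₗ[ZMod p] 𝕍 →ₗ[ZMod p] 𝕍}
    (hβ : IsCommCubeZero β) (hA : (β (1, 0) (1, 0)).2 ≠ 0) :
    β = sqSmul (LinearMap.fst _ _ _ + (-(β (1, 0) (1, 0)).1 / (β (1, 0) (1, 0)).2) •
      LinearMap.snd _ _ _) (β (1, 0) (1, 0)) := by
  set A := β (1, 0) (1, 0)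
  set x := -A.1 / A.2
  have hB : β (1, 0) (0, 1) = x • A :=
    eq_neg_div_smul_of_smul_add_smul_eq_zero hA (hβ.fst_smul_add_snd_smul (1, 0) (1, 0) (1, 0))
  have hC : β (0, 1) (0, 1) = (x * x) • A := by
    have h := hβ.fst_smul_add_snd_smul (0, 1) (1, 0) (1, 0)
    rw [hβ.comm (0, 1), hB] at h
    rw [eq_neg_div_smul_of_smul_add_smul_eq_zero hA h, smul_smul]
  refine ext_of_comm_of_basis hβ.comm (isCommCubeZero_sqSmul ?_).comm ?_ ?_ ?_
  · change A.1 + x * A.2 = 0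
    rw [div_mul_cancel₀ _ hA, add_neg_cancel]
  · simp [A]
  · simp [hB]
  · simp [hC]

lemma IsCommCubeZero.eq_sqSmul_of_snd_eq_zero {β : 𝕍 →ₗ[ZMod p] 𝕍 →ₗ[ZMod p] 𝕍}
    (hβ : IsCommCubeZero β) (hA : (β (1, 0) (1, 0)).2 = 0) :
    β = sqSmul (LinearMap.snd _ _ _) ((β (0, 1) (0, 1)).1, 0) := by
  have hA0 : β (1, 0) (1, 0) = 0 := by
    have h := congrArg Prod.fst (hβ.fst_smul_add_snd_smul (1, 0) (1, 0) (1, 0))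
    simp only [hA, zero_smul, add_zero, Prod.smul_fst, smul_eq_mul, Prod.fst_zero] at h
    exact Prod.ext (mul_self_eq_zero.mp h) hA
  have hB2 : (β (1, 0) (0, 1)).2 = 0 := by
    have h := congrArg Prod.snd (hβ.fst_smul_add_snd_smul (1, 0) (1, 0) (0, 1))
    simpa [hA0] using h
  have hB0 : β (1, 0) (0, 1) = 0 := by
    have h := congrArg Prod.fst (hβ.fst_smul_add_snd_smul (0, 1) (1, 0) (0, 1))
    rw [hβ.comm (0, 1)] at h
    exact Prod.ext (by simpa [hB2] using h) hB2
  have hC2 : (β (0, 1) (0, 1)).2 = 0 := by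
    have h := congrArg Prod.snd (hβ.fst_smul_add_snd_smul (0, 1) (0, 1) (0, 1))
    rw [hβ.comm (0, 1) (1, 0), hB0] at h
    simpa using h
  refine ext_of_comm_of_basis hβ.comm (isCommCubeZero_sqSmul rfl).comm ?_ ?_ ?_
  · simp [hA0]
  · simp [hB0]
  · ext <;> simp [hC2]

/-- A nonzero `β` is `sqSmul f e` with `f e = 0`. Normalising `f` to `(0, 1)` or to `(1, x)` gives
the parameters: `e = (x, 0)` in the first case, `e = t • (-x, 1)` with `t ≠ 0` in the second. -/
def cubeZeroEquiv : {β : 𝕍 →ₗ[ZMod p] 𝕍 →ₗ[ZMod p] 𝕍 // IsCommCubeZero β} ≃ 𝕍 where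
  toFun β :=
    if (β.1 (1, 0) (1, 0)).2 = 0 then ((β.1 (0, 1) (0, 1)).1, 0)
    else (-(β.1 (1, 0) (1, 0)).1 / (β.1 (1, 0) (1, 0)).2, (β.1 (1, 0) (1, 0)).2)
  invFun a :=
    if a.2 = 0 then ⟨sqSmul (LinearMap.snd _ _ _) (a.1, 0), isCommCubeZero_sqSmul rfl⟩
    else ⟨sqSmul (LinearMap.fst _ _ _ + a.1 • LinearMap.snd _ _ _) (a.2 • (-a.1, 1)),
      isCommCubeZero_sqSmul (by simp [mul_comm])⟩
  left_inv := by
    rintro ⟨β, hβ⟩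
    by_cases hA : (β (1, 0) (1, 0)).2 = 0
    · simp only [hA, if_true]
      exact Subtype.ext (hβ.eq_sqSmul_of_snd_eq_zero hA).symm
    · simp only [hA, if_false]
      refine Subtype.ext ((hβ.eq_sqSmul_of_snd_ne_zero hA).trans ?_).symm
      congr
      ext
      · simp [mul_div_cancel₀ _ hA]
      · simp
  right_inv := by
    rintro ⟨x, t⟩
    by_cases ht : t = 0
    · subst ht
      simp
    · simp [ht]

theorem card_isCommCubeZero :
    Nat.card {β : 𝕍 →ₗ[ZMod p] 𝕍 →ₗ[ZMod p] 𝕍 // IsCommCubeZero β} = p ^ 2 := by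
  rw [Nat.card_congr cubeZeroEquiv, Nat.card_prod, Nat.card_zmod, sq]

theorem card_semiregular_prod_zmod_two (hodd : Odd p) :
    Nat.card {H : Subgroup (Perm (Multiplicative (𝕍 × ZMod 2))) //
      H ≤ Hol _ ∧ IsSemiregular H ∧ Nonempty (H ≃* Vp p)} = p ^ 2 := by
  have h2 : (2 : ZMod p) ≠ 0 := Ring.two_ne_zero <| by
    rw [ZMod.ringChar_zmod_n]
    rintro rfl
    exact Nat.not_odd_iff_even.mpr even_two hodd
  have hV : Module.finrank (ZMod p) 𝕍 = 2 := by simp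
  let Φ := fun β : {β : 𝕍 →ₗ[ZMod p] 𝕍 →ₗ[ZMod p] 𝕍 // IsCommCubeZero β} =>
    (⟨circleSubgroup β.2, circleSubgroup_le_Hol β.2, isSemiregular_circleSubgroup β.2,
      nonempty_circleSubgroup_mulEquiv h2 β.2⟩ :
      {H : Subgroup (Perm (Multiplicative (𝕍 × ZMod 2))) //
        H ≤ Hol _ ∧ IsSemiregular H ∧ Nonempty (H ≃* Vp p)})
  have hΦ : Function.Bijective Φ := by
    refine ⟨fun β β' h => circleSubgroup_injective (congrArg Subtype.val h), ?_⟩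
    rintro ⟨H, hH, hsemi, ⟨e⟩⟩
    obtain ⟨β, hβ, rfl⟩ := exists_circleSubgroup_eq h2 hodd hV hH hsemi e
    exact ⟨⟨β, hβ⟩, rfl⟩
  rw [← Nat.card_congr (Equiv.ofBijective Φ hΦ), card_isCommCubeZero]

end Count

/-- `Hol(C_p × C_{2p})` has exactly `p²` semiregular subgroups isomorphic to
`C_p × C_p`. -/
theorem statement5 (p : ℕ) (hp : p.Prime) (hodd : Odd p) :
    Nat.card {H : Subgroup (Equiv.Perm (Multiplicative (ZMod p × ZMod (2 * p)))) //
        H ≤ Hol (Multiplicative (ZMod p × ZMod (2 * p))) ∧ IsSemiregular H ∧ Nonempty (H ≃* Vp p)} = p ^ 2 := by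
  have : Fact p.Prime := ⟨hp⟩
  let e : ZMod p × ZMod (2 * p) ≃+ (ZMod p × ZMod p) × ZMod 2 :=
    ((AddEquiv.refl _).prodCongr
      ((ZMod.chineseRemainder (Nat.coprime_two_left.mpr hodd)).toAddEquiv.trans
        AddEquiv.prodComm)).trans (AddEquiv.prodAssoc ..).symm
  rw [card_semiregular_congr (AddEquiv.toMultiplicative e)]
  exact card_semiregular_prod_zmod_two hodd
end
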